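/- arXiv:1911.04344 — 2 statements merged into one kernel-verified Lean document; each statement's English description precedes it below -/
import Mathlib

section
/- If f : Set α → Set α distributes over arbitrary unions of nonempty index families (f (⋃ i, A i) = ⋃ i, f (A i) for any nonempty index type) and f ∅ ≠ ∅, then X := ⋃ n : ℕ, f^[n+1] ∅ is a fixed point of f, i.e., f X = X. -/
/-! The iterates `f^[n] ∅` form an increasing chain because `f`, commuting with binary unions,
is monotone; commuting with the countable union of the chain, `f` then just shifts its index. -/

open Set Function

theorem Set.monotone_of_map_iUnion {α β : Type*} {f : Set α → Set β}
    (hf : ∀ (ι : Type) [Nonempty ι] (A : ι → Set α), f (⋃ i, A i) = ⋃ i, f (A i)) :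
    Monotone f := by
  intro A B hAB
  have hunion : f (A ∪ B) = f A ∪ f B := by
    simp only [union_eq_iUnion, hf Bool, Bool.apply_cond f]
  calc f A ⊆ f A ∪ f B := subset_union_left
    _ = f B := by rw [← hunion, union_eq_right.2 hAB]

theorem stmt_12_general {α : Type*} (f : Set α → Set α)
    (hdist : ∀ (ι : Type) [Nonempty ι] (A : ι → Set α), f (⋃ i, A i) = ⋃ i, f (A i)) :
    f (⋃ n : ℕ, f^[n + 1] ∅) = ⋃ n : ℕ, f^[n + 1] ∅ := by
  have hchain : Monotone fun n => f^[n] ∅ :=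
    (monotone_of_map_iUnion hdist).monotone_iterate_of_le_map (empty_subset _)
  calc f (⋃ n : ℕ, f^[n + 1] ∅) = ⋃ n : ℕ, f^[n + 2] ∅ := by
        simp only [hdist ℕ, ← iterate_succ_apply' f]
    _ = ⋃ n : ℕ, f^[n + 1] ∅ := by rw [hchain.iUnion_nat_add 2, hchain.iUnion_nat_add 1]

theorem stmt_12 {α : Type*} (f : Set α → Set α)
    (hdist : ∀ (ι : Type) [Nonempty ι] (A : ι → Set α), f (⋃ i, A i) = ⋃ i, f (A i))
    (hnull : f ∅ ≠ ∅) :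
    f (⋃ n : ℕ, f^[n + 1] ∅) = ⋃ n : ℕ, f^[n + 1] ∅ :=
  stmt_12_general f hdist
end

section
/- Sub-conjunctivity of preferential choice: define pc E := pv S E ∪ (if pv S E = ∅ then pv T E else ∅) pointwise in the state, where (pv S E) s := {x | ∃ s', (s,s') ∈ S ∧ x ∈ E s'}. Then for all expressions E, F : σ → Set α and every state s, pc (fun s => E s ∪ F s) s ⊆ pc E s ∪ pc F s. -/
def pv {σ α : Type*} (S : Set (σ × σ)) (E : σ → Set α) : σ → Set α :=
  fun s => {x | ∃ s', (s, s') ∈ S ∧ x ∈ E s'}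

open Classical in
noncomputable def pc {σ α : Type*} (S T : Set (σ × σ)) (E : σ → Set α) : σ → Set α :=
  fun s => pv S E s ∪ (if pv S E s = ∅ then pv T E s else ∅)

theorem stmt_19 {σ α : Type*} (S T : Set (σ × σ)) (E F : σ → Set α) (s : σ) :
    pc S T (fun s => E s ∪ F s) s ⊆ pc S T E s ∪ pc S T F s := by
  intro x hx
  simp only [pc, Set.mem_union, Set.mem_ite_empty_right] at hx ⊢
  simp only [pc, pv, Set.mem_union, Set.mem_setOf_eq, Set.mem_ite_empty_right,
    Set.eq_empty_iff_forall_notMem] at hx ⊢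
  rcases hx with ⟨s', hS, hE | hF⟩ | ⟨hemp, s', hT, hE | hF⟩
  · exact Or.inl (Or.inl ⟨s', hS, hE⟩)
  · exact Or.inr (Or.inl ⟨s', hS, hF⟩)
  · refine Or.inl (Or.inr ⟨fun y ⟨t, ht, hy⟩ => hemp y ⟨t, ht, Or.inl hy⟩, ⟨s', hT, hE⟩⟩)
  · refine Or.inr (Or.inr ⟨fun y ⟨t, ht, hy⟩ => hemp y ⟨t, ht, Or.inr hy⟩, ⟨s', hT, hF⟩⟩)
end
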